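/- arXiv:2512.01285 — 15 statements merged into one kernel-verified Lean document; each statement's English description precedes it below -/
import Mathlib

section
/- The set of all (a,b) ∈ ℝ² satisfying 6a + (3/2)b > 0, 6a + (1/2)b > 0, 6a + b > 0, 6a > 0 and 2b > 0 is contained in the topological interior of the conical hull of the vectors (1/3, -1), (0, 1), (1/6, 0) in ℝ². -/
/-- The conical hull of three vectors in `ℝ × ℝ`: all linear combinations
with nonnegative real coefficients. -/
def coneHull3 (v₁ v₂ v₃ : ℝ × ℝ) : Set (ℝ × ℝ) :=
  {x | ∃ c₁ c₂ c₃ : ℝ, 0 ≤ c₁ ∧ 0 ≤ c₂ ∧ 0 ≤ c₃ ∧ x = c₁ • v₁ + c₂ • v₂ + c₃ • v₃}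

theorem stmt_0 :
    {p : ℝ × ℝ | 6 * p.1 + (3/2) * p.2 > 0 ∧
      6 * p.1 + (1/2) * p.2 > 0 ∧
      6 * p.1 + p.2 > 0 ∧
      6 * p.1 > 0 ∧
      2 * p.2 > 0} ⊆
      interior (coneHull3 (1/3, -1) (0, 1) (1/6, 0)) := by
  apply interior_maximal
  · rintro ⟨a, b⟩ ⟨-, -, -, ha, hb⟩
    refine ⟨0, b, 6 * a, le_rfl, by linarith, by linarith, ?_⟩
    simp [Prod.ext_iff]
    ring
  · have : {p : ℝ × ℝ | 6 * p.1 + (3/2) * p.2 > 0 ∧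
      6 * p.1 + (1/2) * p.2 > 0 ∧
      6 * p.1 + p.2 > 0 ∧
      6 * p.1 > 0 ∧
      2 * p.2 > 0} =
      {p : ℝ × ℝ | 6 * p.1 + (3/2) * p.2 > 0} ∩
      ({p | 6 * p.1 + (1/2) * p.2 > 0} ∩
      ({p | 6 * p.1 + p.2 > 0} ∩
      ({p | 6 * p.1 > 0} ∩ {p | 2 * p.2 > 0}))) := rfl
    rw [this]
    refine (isOpen_lt (by fun_prop) (by fun_prop)).inter
      ((isOpen_lt (by fun_prop) (by fun_prop)).inter
      ((isOpen_lt (by fun_prop) (by fun_prop)).inter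
      ((isOpen_lt (by fun_prop) (by fun_prop)).inter
      (isOpen_lt (by fun_prop) (by fun_prop)))))
end

section
/- The set of all (a,b) ∈ ℝ² satisfying 3a + b > 0, 5a + b > 0, 7a + 3b > 0, 2a > 0 and 4a + 2b > 0 is contained in the topological interior of the conical hull of the vectors (1/2, -1/2), (0, 1), (1, -2) in ℝ². -/
theorem stmt_1 :
    {p : ℝ × ℝ | 3 * p.1 + p.2 > 0 ∧
      5 * p.1 + p.2 > 0 ∧
      7 * p.1 + 3 * p.2 > 0 ∧
      2 * p.1 > 0 ∧
      4 * p.1 + 2 * p.2 > 0} ⊆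
      interior (coneHull3 (1/2, -1/2) (0, 1) (1, -2)) := by
  have hU : IsOpen {p : ℝ × ℝ | 0 < p.1 ∧ 0 < 2 * p.1 + p.2} := by
    apply IsOpen.inter
    · exact isOpen_lt continuous_const continuous_fst
    · exact isOpen_lt continuous_const ((continuous_const.mul continuous_fst).add continuous_snd)
  have hsub : {p : ℝ × ℝ | 0 < p.1 ∧ 0 < 2 * p.1 + p.2} ⊆
      coneHull3 (1/2, -1/2) (0, 1) (1, -2) := by
    rintro ⟨x, y⟩ ⟨hx, hxy⟩
    exact ⟨0, 2 * x + y, x, le_refl 0, le_of_lt hxy, le_of_lt hx, by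
      simp [Prod.ext_iff]; ring⟩
  intro p hp
  apply interior_mono hsub
  rw [hU.interior_eq]
  obtain ⟨_, _, _, h4, h5⟩ := hp
  exact ⟨by linarith, by linarith⟩
end

section
/- The set of all (a,b) ∈ ℝ² satisfying 3a + b > 0, 3a + (1/2)b > 0, 3a + (3/2)b > 0, 3a + 2b > 0 and 3a > 0 is contained in the topological interior of the conical hull of the vectors (1/3, 0), (0, 1), (2/3, -1) in ℝ². -/
theorem stmt_2 :
    {p : ℝ × ℝ | 3 * p.1 + p.2 > 0 ∧
      3 * p.1 + (1/2) * p.2 > 0 ∧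
      3 * p.1 + (3/2) * p.2 > 0 ∧
      3 * p.1 + 2 * p.2 > 0 ∧
      3 * p.1 > 0} ⊆
      interior (coneHull3 (1/3, 0) (0, 1) (2/3, -1)) := by
  have hsub : {p : ℝ × ℝ | 3 * p.1 + p.2 > 0 ∧
      3 * p.1 + (1/2) * p.2 > 0 ∧
      3 * p.1 + (3/2) * p.2 > 0 ∧
      3 * p.1 + 2 * p.2 > 0 ∧
      3 * p.1 > 0} ⊆ coneHull3 (1/3, 0) (0, 1) (2/3, -1) := by
    rintro ⟨a, b⟩ ⟨h1, h2, h3, h4, h5⟩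
    simp only [Set.mem_setOf_eq] at *
    rcases le_or_gt 0 b with hb | hb
    · exact ⟨3 * a, b, 0, by linarith, hb, le_refl 0, by
        simp [Prod.ext_iff]; ring⟩
    · exact ⟨3 * a + 2 * b, 0, -b, by linarith, le_refl 0, by linarith, by
        simp [Prod.ext_iff]; ring⟩
  have hopen : IsOpen {p : ℝ × ℝ | 3 * p.1 + p.2 > 0 ∧
      3 * p.1 + (1/2) * p.2 > 0 ∧
      3 * p.1 + (3/2) * p.2 > 0 ∧
      3 * p.1 + 2 * p.2 > 0 ∧
      3 * p.1 > 0} := by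
    have o1 : IsOpen {p : ℝ × ℝ | 3 * p.1 + p.2 > 0} :=
      isOpen_lt continuous_const (by fun_prop)
    have o2 : IsOpen {p : ℝ × ℝ | 3 * p.1 + (1/2) * p.2 > 0} :=
      isOpen_lt continuous_const (by fun_prop)
    have o3 : IsOpen {p : ℝ × ℝ | 3 * p.1 + (3/2) * p.2 > 0} :=
      isOpen_lt continuous_const (by fun_prop)
    have o4 : IsOpen {p : ℝ × ℝ | 3 * p.1 + 2 * p.2 > 0} :=
      isOpen_lt continuous_const (by fun_prop)
    have o5 : IsOpen {p : ℝ × ℝ | 3 * p.1 > 0} :=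
      isOpen_lt continuous_const (by fun_prop)
    exact o1.inter (o2.inter (o3.inter (o4.inter o5)))
  intro p hp
  exact interior_mono hsub (by rwa [hopen.interior_eq])
end

section
/- The set of all (a,b) ∈ ℝ² satisfying 8a + 3b > 0, 18a + 5b > 0, 13a + 4b > 0, 45a + 16b > 0, 33a + 8b > 0, 5a + b > 0, 3a + b > 0, 51a + 20b > 0 and 27a + 11b > 0 is contained in the union of the topological interiors of the conical hull of {(4/3, -3), (0, 1), (1/3, 0)}, the conical hull of {(0, 1), (1/3, 0), (-2/3, 3)}, and the conical hull of {(4/3, -3), (1, -2), (2, -5)} in ℝ². -/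
lemma isOpen_half (a b : ℝ) : IsOpen {p : ℝ × ℝ | 0 < a * p.1 + b * p.2} :=
  isOpen_lt continuous_const (by fun_prop)

lemma isOpen_pair (a b c d : ℝ) :
    IsOpen {p : ℝ × ℝ | 0 < a * p.1 + b * p.2 ∧ 0 < c * p.1 + d * p.2} :=
  (isOpen_half a b).inter (isOpen_half c d)

lemma sub1 : {p : ℝ × ℝ | 0 < 1 * p.1 + 0 * p.2 ∧ 0 < 9 * p.1 + 4 * p.2} ⊆
    coneHull3 (4/3, -3) (0, 1) (1/3, 0) := by
  rintro p ⟨h1, h2⟩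
  exact ⟨3/4 * p.1, 9/4 * p.1 + p.2, 0, by linarith, by linarith, le_refl 0,
    by refine Prod.ext ?_ ?_ <;> simp <;> ring⟩

lemma sub2 : {p : ℝ × ℝ | 0 < 0 * p.1 + 1 * p.2 ∧ 0 < 9 * p.1 + 2 * p.2} ⊆
    coneHull3 (0, 1) (1/3, 0) (-2/3, 3) := by
  rintro p ⟨h1, h2⟩
  exact ⟨0, 3 * p.1 + 2/3 * p.2, p.2 / 3, le_refl 0, by linarith, by linarith,
    by refine Prod.ext ?_ ?_ <;> simp <;> ring⟩

lemma sub3 : {p : ℝ × ℝ | 0 < 5 * p.1 + 2 * p.2 ∧ 0 < -2 * p.1 + -1 * p.2} ⊆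
    coneHull3 (4/3, -3) (1, -2) (2, -5) := by
  rintro p ⟨h1, h2⟩
  exact ⟨0, 5 * p.1 + 2 * p.2, -(2 * p.1 + p.2), le_refl 0, by linarith, by linarith,
    by refine Prod.ext ?_ ?_ <;> simp <;> ring⟩

theorem stmt_5 :
    {p : ℝ × ℝ | 8 * p.1 + 3 * p.2 > 0 ∧
      18 * p.1 + 5 * p.2 > 0 ∧
      13 * p.1 + 4 * p.2 > 0 ∧
      45 * p.1 + 16 * p.2 > 0 ∧
      33 * p.1 + 8 * p.2 > 0 ∧
      5 * p.1 + p.2 > 0 ∧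
      3 * p.1 + p.2 > 0 ∧
      51 * p.1 + 20 * p.2 > 0 ∧
      27 * p.1 + 11 * p.2 > 0} ⊆
      interior (coneHull3 (4/3, -3) (0, 1) (1/3, 0)) ∪
      interior (coneHull3 (0, 1) (1/3, 0) (-2/3, 3)) ∪
      interior (coneHull3 (4/3, -3) (1, -2) (2, -5)) := by
  rintro p ⟨h1, h2, h3, h4, h5, h6, h7, h8, h9⟩
  rcases lt_trichotomy (2 * p.1 + p.2) 0 with hc | hc | hc
  · -- third cone
    right
    exact interior_maximal sub3 (isOpen_pair 5 2 (-2) (-1)) ⟨by linarith, by linarith⟩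
  · -- 2x+y = 0 : then x > 0 (from 3x+y>0 ⇒ x > 0), first cone
    left; left
    exact interior_maximal sub1 (isOpen_pair 1 0 9 4) ⟨by linarith, by linarith⟩
  · -- 2x+y > 0
    rcases lt_or_ge 0 p.1 with hx | hx
    · left; left
      exact interior_maximal sub1 (isOpen_pair 1 0 9 4) ⟨by linarith, by linarith⟩
    · left; right
      exact interior_maximal sub2 (isOpen_pair 0 1 9 2) ⟨by linarith, by linarith⟩
end

section
/- The set of all (a,b) ∈ ℝ² satisfying 3a + b > 0, 3a + (5/4)b > 0, 3a + (11/12)b > 0, 3a + (3/4)b > 0, 3a + (13/12)b > 0, 3a + (5/6)b > 0, 3a + (7/6)b > 0, 3a + (4/3)b > 0 and 3a + (2/3)b > 0 is contained in the union of the topological interiors of the conical hull of {(1/3, 0), (4/3, -3), (0, 1)} and the conical hull of {(1/3, 0), (-2/3, 3), (2/3, -1)} in ℝ². -/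
theorem stmt_8 :
    {p : ℝ × ℝ | 3 * p.1 + p.2 > 0 ∧
      3 * p.1 + (5/4) * p.2 > 0 ∧
      3 * p.1 + (11/12) * p.2 > 0 ∧
      3 * p.1 + (3/4) * p.2 > 0 ∧
      3 * p.1 + (13/12) * p.2 > 0 ∧
      3 * p.1 + (5/6) * p.2 > 0 ∧
      3 * p.1 + (7/6) * p.2 > 0 ∧
      3 * p.1 + (4/3) * p.2 > 0 ∧
      3 * p.1 + (2/3) * p.2 > 0} ⊆
      interior (coneHull3 (1/3, 0) (4/3, -3) (0, 1)) ∪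
      interior (coneHull3 (1/3, 0) (-2/3, 3) (2/3, -1)) := by
  intro p hp
  obtain ⟨h1, h2, h3, h4, h5, h6, h7, h8, h9⟩ := hp
  by_cases ha : 0 < p.1
  · left
    have hsub : {q : ℝ × ℝ | 0 < q.1 ∧ 0 < 9 * q.1 + 4 * q.2} ⊆
        coneHull3 (1/3, 0) (4/3, -3) (0, 1) := by
      rintro ⟨a, b⟩ ⟨hx, hy⟩
      refine ⟨0, 3 * a / 4, (9 * a + 4 * b) / 4, le_refl 0, by linarith, by linarith, ?_⟩
      simp only [Prod.ext_iff, Prod.smul_mk, Prod.mk_add_mk, smul_eq_mul]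
      constructor <;> ring
    have hopen : IsOpen {q : ℝ × ℝ | 0 < q.1 ∧ 0 < 9 * q.1 + 4 * q.2} :=
      (isOpen_lt continuous_const continuous_fst).and
        (isOpen_lt continuous_const ((continuous_const.mul continuous_fst).add (continuous_const.mul continuous_snd)))
    exact interior_maximal hsub hopen ⟨ha, by linarith⟩
  · right
    push_neg at ha
    have hsub : {q : ℝ × ℝ | 0 < 3 * q.1 + 2 * q.2 ∧ 0 < 9 * q.1 + 2 * q.2} ⊆
        coneHull3 (1/3, 0) (-2/3, 3) (2/3, -1) := by
      rintro ⟨a, b⟩ ⟨hx, hy⟩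
      refine ⟨0, (3 * a + 2 * b) / 4, (9 * a + 2 * b) / 4, le_refl 0, by linarith, by linarith, ?_⟩
      simp only [Prod.ext_iff, Prod.smul_mk, Prod.mk_add_mk, smul_eq_mul]
      constructor <;> ring
    have hopen : IsOpen {q : ℝ × ℝ | 0 < 3 * q.1 + 2 * q.2 ∧ 0 < 9 * q.1 + 2 * q.2} :=
      (isOpen_lt continuous_const ((continuous_const.mul continuous_fst).add (continuous_const.mul continuous_snd))).and
        (isOpen_lt continuous_const ((continuous_const.mul continuous_fst).add (continuous_const.mul continuous_snd)))
    exact interior_maximal hsub hopen ⟨by linarith, by linarith⟩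
end

section
/- The set of all (a,b) ∈ ℝ² satisfying 10a + 3b > 0, 14a + 5b > 0, 3a + b > 0, 2a + (1/2)b > 0 and 4a + (3/2)b > 0 is contained in the union of the topological interiors of the conical hull of {(0, 1), (2, -5), (1, -2)}, the conical hull of {(0, 1), (1, -2), (-1, 4)}, and the conical hull of {(2, -5), (1, -2), (3, -8)} in ℝ². -/
private lemma mem_int {U S : Set (ℝ × ℝ)} (hU : IsOpen U) (hsub : U ⊆ S)
    {p : ℝ × ℝ} (hp : p ∈ U) : p ∈ interior S :=
  (hU.subset_interior_iff.mpr hsub) hp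

private lemma open_aux (c d : ℝ) : IsOpen {p : ℝ × ℝ | 0 < c * p.1 + d * p.2} :=
  isOpen_lt continuous_const (by continuity)

theorem stmt_9 :
    {p : ℝ × ℝ | 10 * p.1 + 3 * p.2 > 0 ∧
      14 * p.1 + 5 * p.2 > 0 ∧
      3 * p.1 + p.2 > 0 ∧
      2 * p.1 + (1/2) * p.2 > 0 ∧
      4 * p.1 + (3/2) * p.2 > 0} ⊆
      interior (coneHull3 (0, 1) (2, -5) (1, -2)) ∪
      interior (coneHull3 (0, 1) (1, -2) (-1, 4)) ∪
      interior (coneHull3 (2, -5) (1, -2) (3, -8)) := by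
  rintro ⟨a, b⟩ ⟨h1, h2, h3, h4, h5⟩
  simp only [Set.mem_setOf_eq] at *
  rcases lt_trichotomy (2 * a + b) 0 with h | h | h
  · -- third cone: {8x+3y>0, -(2x+y)>0}
    right
    refine mem_int (IsOpen.inter (open_aux 8 3) (open_aux (-2) (-1))) ?_ ⟨show (0:ℝ) < _ * a + _ * b by linarith, show (0:ℝ) < _ * a + _ * b by linarith⟩
    rintro ⟨x, y⟩ ⟨hx, hy⟩
    simp only [Set.mem_setOf_eq] at hx hy
    refine ⟨0, (8*x+3*y)/2, -(2*x+y)/2, le_refl 0, by linarith, by linarith, ?_⟩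
    simp only [coneHull3, Prod.smul_mk, Prod.mk_add_mk, Prod.mk.injEq, smul_eq_mul]
    constructor <;> ring
  · -- first cone: {x>0, 5x+2y>0}
    left; left
    have ha : 0 < a := by linarith
    refine mem_int (IsOpen.inter (open_aux 1 0) (open_aux 5 2)) ?_ ⟨show (0:ℝ) < _ * a + _ * b by linarith, show (0:ℝ) < _ * a + _ * b by linarith⟩
    rintro ⟨x, y⟩ ⟨hx, hy⟩
    simp only [Set.mem_setOf_eq] at hx hy
    refine ⟨(5*x+2*y)/2, x/2, 0, by linarith, by linarith, le_refl 0, ?_⟩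
    simp only [coneHull3, Prod.smul_mk, Prod.mk_add_mk, Prod.mk.injEq, smul_eq_mul]
    constructor <;> ring
  · -- second cone: {4x+y>0, 2x+y>0}
    left; right
    refine mem_int (IsOpen.inter (open_aux 4 1) (open_aux 2 1)) ?_ ⟨show (0:ℝ) < _ * a + _ * b by linarith, show (0:ℝ) < _ * a + _ * b by linarith⟩
    rintro ⟨x, y⟩ ⟨hx, hy⟩
    simp only [Set.mem_setOf_eq] at hx hy
    refine ⟨0, (4*x+y)/2, (2*x+y)/2, le_refl 0, by linarith, by linarith, ?_⟩
    simp only [coneHull3, Prod.smul_mk, Prod.mk_add_mk, Prod.mk.injEq, smul_eq_mul]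
    constructor <;> ring
end

section
/- The set of all (a,b) ∈ ℝ² satisfying 5a + b > 0, 5a + (4/3)b > 0, 5a + (5/6)b > 0, 5a + (7/6)b > 0, 5a + (2/3)b > 0, 5a + (1/2)b > 0 and 5a + (3/2)b > 0 is contained in the union of the topological interiors of the conical hull of {(1/5, 0), (3/5, -2), (0, 1), (3/5, 0)} and the conical hull of {(1/5, 0), (2/5, -1), (-1/5, 2)} in ℝ². -/
/-- The conical hull of four vectors in `ℝ × ℝ`: all linear combinations
with nonnegative real coefficients. -/
def coneHull4 (v₁ v₂ v₃ v₄ : ℝ × ℝ) : Set (ℝ × ℝ) :=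
  {x | ∃ c₁ c₂ c₃ c₄ : ℝ, 0 ≤ c₁ ∧ 0 ≤ c₂ ∧ 0 ≤ c₃ ∧ 0 ≤ c₄ ∧
    x = c₁ • v₁ + c₂ • v₂ + c₃ • v₃ + c₄ • v₄}


lemma open4_subset :
    {q : ℝ × ℝ | 0 < q.1 ∧ 0 < 10 * q.1 + 3 * q.2} ⊆
      interior (coneHull4 (1/5, 0) (3/5, -2) (0, 1) (3/5, 0)) := by
  apply interior_maximal
  · rintro ⟨a, b⟩ ⟨h1, h2⟩
    by_cases hb : b ≤ 0
    · exact ⟨(10*a+3*b)/2, -b/2, 0, 0, by linarith, by linarith, le_refl _, le_refl _,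
        by simp [Prod.ext_iff]; ring⟩
    · exact ⟨5*a, 0, b, 0, by linarith, le_refl _, by linarith, le_refl _,
        by simp [Prod.ext_iff]; ring⟩
  · exact IsOpen.inter (isOpen_lt continuous_const continuous_fst)
      (isOpen_lt continuous_const (Continuous.add (continuous_const.mul continuous_fst) (continuous_const.mul continuous_snd)))

lemma open3_subset :
    {q : ℝ × ℝ | 0 < 10 * q.1 + q.2 ∧ 0 < 5 * q.1 + 2 * q.2} ⊆
      interior (coneHull3 (1/5, 0) (2/5, -1) (-1/5, 2)) := by
  apply interior_maximal
  · rintro ⟨a, b⟩ ⟨h1, h2⟩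
    by_cases hb : b ≤ 0
    · exact ⟨5*a+2*b, -b, 0, by linarith, by linarith, le_refl _,
        by simp [Prod.ext_iff]; ring⟩
    · exact ⟨(10*a+b)/2, 0, b/2, by linarith, le_refl _, by linarith,
        by simp [Prod.ext_iff]; ring⟩
  · exact IsOpen.inter (isOpen_lt continuous_const (Continuous.add (continuous_const.mul continuous_fst) continuous_snd))
      (isOpen_lt continuous_const (Continuous.add (continuous_const.mul continuous_fst) (continuous_const.mul continuous_snd)))

theorem stmt_10 :
    {p : ℝ × ℝ | 5 * p.1 + p.2 > 0 ∧
      5 * p.1 + (4/3) * p.2 > 0 ∧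
      5 * p.1 + (5/6) * p.2 > 0 ∧
      5 * p.1 + (7/6) * p.2 > 0 ∧
      5 * p.1 + (2/3) * p.2 > 0 ∧
      5 * p.1 + (1/2) * p.2 > 0 ∧
      5 * p.1 + (3/2) * p.2 > 0} ⊆
      interior (coneHull4 (1/5, 0) (3/5, -2) (0, 1) (3/5, 0)) ∪
      interior (coneHull3 (1/5, 0) (2/5, -1) (-1/5, 2)) := by
  intro p hp
  obtain ⟨h1, h2, h3, h4, h5, h6, h7⟩ := hp
  by_cases hb : p.2 ≤ 0
  · left
    exact open4_subset ⟨by nlinarith, by linarith⟩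
  · right
    exact open3_subset ⟨by linarith, by linarith⟩
end

section
/- The set of all (a,b) ∈ ℝ² satisfying 15a + (6/5)b > 0, 15a + (19/20)b > 0, 15a + b > 0, 15a + (4/5)b > 0, 15a + (21/20)b > 0, 15a + (17/20)b > 0, 15a + (11/10)b > 0, 15a + (9/10)b > 0, 15a + (23/20)b > 0, 15a + (5/4)b > 0 and 15a + (3/4)b > 0 is contained in the union of the topological interiors of the conical hull of {(1/3, -4), (0, 1), (1/5, 0)} and the conical hull of {(-1/5, 4), (2/15, -1), (2/15, 0)} in ℝ². -/
theorem stmt_11 :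
    {p : ℝ × ℝ | 15 * p.1 + (6/5) * p.2 > 0 ∧
      15 * p.1 + (19/20) * p.2 > 0 ∧
      15 * p.1 + p.2 > 0 ∧
      15 * p.1 + (4/5) * p.2 > 0 ∧
      15 * p.1 + (21/20) * p.2 > 0 ∧
      15 * p.1 + (17/20) * p.2 > 0 ∧
      15 * p.1 + (11/10) * p.2 > 0 ∧
      15 * p.1 + (9/10) * p.2 > 0 ∧
      15 * p.1 + (23/20) * p.2 > 0 ∧
      15 * p.1 + (5/4) * p.2 > 0 ∧
      15 * p.1 + (3/4) * p.2 > 0} ⊆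
      interior (coneHull3 (1/3, -4) (0, 1) (1/5, 0)) ∪
      interior (coneHull3 (-1/5, 4) (2/15, -1) (2/15, 0)) := by
  intro p hp
  obtain ⟨h1, h2, h3, h4, h5, h6, h7, h8, h9, h10, h11⟩ := hp
  by_cases hx : 0 < p.1
  · left
    have hopen : IsOpen {q : ℝ × ℝ | 0 < q.1 ∧ 0 < 12 * q.1 + q.2} := by
      apply IsOpen.inter
      · exact isOpen_lt continuous_const continuous_fst
      · exact isOpen_lt continuous_const
          ((continuous_const.mul continuous_fst).add continuous_snd)
    have hsub : {q : ℝ × ℝ | 0 < q.1 ∧ 0 < 12 * q.1 + q.2} ⊆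
        coneHull3 (1/3, -4) (0, 1) (1/5, 0) := by
      rintro ⟨x, y⟩ ⟨hx', hxy⟩
      refine ⟨3 * x, 12 * x + y, 0, by linarith, by linarith, le_refl 0, ?_⟩
      simp only [Prod.smul_mk, smul_eq_mul, Prod.mk_add_mk, Prod.mk.injEq]
      constructor <;> ring
    apply interior_mono hsub
    rw [hopen.interior_eq]
    exact ⟨hx, by linarith⟩
  · right
    push_neg at hx
    have hy : 0 < p.2 := by linarith
    have hopen : IsOpen {q : ℝ × ℝ | 0 < 15 * q.1 + 2 * q.2 ∧ 0 < 15 * q.1 + (3/4) * q.2} := by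
      apply IsOpen.inter <;>
        exact isOpen_lt continuous_const
          ((continuous_const.mul continuous_fst).add (continuous_const.mul continuous_snd))
    have hsub : {q : ℝ × ℝ | 0 < 15 * q.1 + 2 * q.2 ∧ 0 < 15 * q.1 + (3/4) * q.2} ⊆
        coneHull3 (-1/5, 4) (2/15, -1) (2/15, 0) := by
      rintro ⟨x, y⟩ ⟨ha, hb⟩
      refine ⟨3 * x + (2/5) * y, 12 * x + (3/5) * y, 0, by linarith, by linarith, le_refl 0, ?_⟩
      simp only [Prod.smul_mk, smul_eq_mul, Prod.mk_add_mk, Prod.mk.injEq]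
      constructor <;> ring
    apply interior_mono hsub
    rw [hopen.interior_eq]
    exact ⟨by linarith, h11⟩
end

section
/- The set of all (a,b) ∈ ℝ² satisfying 8a + 3b > 0, 18a + 5b > 0, 13a + 4b > 0, 45a + 16b > 0, 33a + 8b > 0, 5a + b > 0, 3a + b > 0, 51a + 20b > 0 and 27a + 11b > 0 is NOT contained in the conical hull of the vectors (4/3, -3), (0, 1), (1/3, 0) in ℝ²; that is, there exists a point satisfying all the listed inequalities that is not a nonnegative linear combination of these three vectors. -/
theorem stmt_13 :
    ¬ ({p : ℝ × ℝ | 8 * p.1 + 3 * p.2 > 0 ∧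
      18 * p.1 + 5 * p.2 > 0 ∧
      13 * p.1 + 4 * p.2 > 0 ∧
      45 * p.1 + 16 * p.2 > 0 ∧
      33 * p.1 + 8 * p.2 > 0 ∧
      5 * p.1 + p.2 > 0 ∧
      3 * p.1 + p.2 > 0 ∧
      51 * p.1 + 20 * p.2 > 0 ∧
      27 * p.1 + 11 * p.2 > 0} ⊆
      coneHull3 (4/3, -3) (0, 1) (1/3, 0)) := by
  intro h
  have hmem : ((10 : ℝ), (-23 : ℝ)) ∈ {p : ℝ × ℝ | 8 * p.1 + 3 * p.2 > 0 ∧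
      18 * p.1 + 5 * p.2 > 0 ∧
      13 * p.1 + 4 * p.2 > 0 ∧
      45 * p.1 + 16 * p.2 > 0 ∧
      33 * p.1 + 8 * p.2 > 0 ∧
      5 * p.1 + p.2 > 0 ∧
      3 * p.1 + p.2 > 0 ∧
      51 * p.1 + 20 * p.2 > 0 ∧
      27 * p.1 + 11 * p.2 > 0} := by
    simp only [Set.mem_setOf_eq]
    norm_num
  obtain ⟨c₁, c₂, c₃, h₁, h₂, h₃, heq⟩ := h hmem
  have hx : (10 : ℝ) = c₁ * (4/3) + c₃ * (1/3) := by
    have := congrArg Prod.fst heq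
    simpa using this
  have hy : (-23 : ℝ) = c₁ * (-3) + c₂ := by
    have := congrArg Prod.snd heq
    simpa using this
  nlinarith
end

section
/- The set of all (a,b) ∈ ℝ² satisfying 3a + (9/8)b > 0, 3a + (7/8)b > 0, 3a + (3/4)b > 0, 3a + (5/4)b > 0, 3a + b > 0, 3a + (11/8)b > 0 and 3a + (5/8)b > 0 is NOT contained in the conical hull of the vectors (2/3, -1), (0, 1), (-1/3, 2) in ℝ²; that is, there exists a point satisfying all the listed inequalities that is not a nonnegative linear combination of these three vectors. -/
theorem stmt_14 :
    ¬ ({p : ℝ × ℝ | 3 * p.1 + (9/8) * p.2 > 0 ∧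
      3 * p.1 + (7/8) * p.2 > 0 ∧
      3 * p.1 + (3/4) * p.2 > 0 ∧
      3 * p.1 + (5/4) * p.2 > 0 ∧
      3 * p.1 + p.2 > 0 ∧
      3 * p.1 + (11/8) * p.2 > 0 ∧
      3 * p.1 + (5/8) * p.2 > 0} ⊆
      coneHull3 (2/3, -1) (0, 1) (-1/3, 2)) := by
  intro h
  have hm : ((1 : ℝ), (-8/5 : ℝ)) ∈ coneHull3 (2/3, -1) (0, 1) (-1/3, 2) := by
    apply h
    simp only [Set.mem_setOf_eq]
    norm_num
  obtain ⟨c₁, c₂, c₃, h₁, h₂, h₃, heq⟩ := hm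
  rw [Prod.ext_iff] at heq
  simp only [Prod.smul_mk, Prod.fst_add, Prod.snd_add, smul_eq_mul, Prod.mk.injEq] at heq
  obtain ⟨hx, hy⟩ := heq
  nlinarith [hx, hy, h₁, h₂, h₃]
end

section
/- The set of all (a,b) ∈ ℝ² satisfying 3a + b > 0, 3a + (5/4)b > 0, 3a + (3/4)b > 0, 3a + (1/2)b > 0 and 3a + (3/2)b > 0 is NOT contained in the conical hull of the vectors (1/3, 0), (2/3, -1), (0, 1) in ℝ²; that is, there exists a point satisfying all the listed inequalities that is not a nonnegative linear combination of these three vectors. -/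
theorem stmt_15 :
    ¬ ({p : ℝ × ℝ | 3 * p.1 + p.2 > 0 ∧
      3 * p.1 + (5/4) * p.2 > 0 ∧
      3 * p.1 + (3/4) * p.2 > 0 ∧
      3 * p.1 + (1/2) * p.2 > 0 ∧
      3 * p.1 + (3/2) * p.2 > 0} ⊆
      coneHull3 (1/3, 0) (2/3, -1) (0, 1)) := by
  intro h
  have hp : ((7/6 : ℝ), (-2 : ℝ)) ∈ {p : ℝ × ℝ | 3 * p.1 + p.2 > 0 ∧
      3 * p.1 + (5/4) * p.2 > 0 ∧
      3 * p.1 + (3/4) * p.2 > 0 ∧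
      3 * p.1 + (1/2) * p.2 > 0 ∧
      3 * p.1 + (3/2) * p.2 > 0} := by
    constructor <;> [norm_num; constructor] <;> [norm_num; constructor] <;>
      [norm_num; constructor] <;> norm_num
  obtain ⟨c₁, c₂, c₃, h₁, h₂, h₃, heq⟩ := h hp
  have e1 : (7/6 : ℝ) = c₁ * (1/3) + c₂ * (2/3) + c₃ * 0 := congrArg Prod.fst heq
  have e2 : (-2 : ℝ) = c₁ * 0 + c₂ * (-1) + c₃ * 1 := congrArg Prod.snd heq
  linarith
end

section
/- The set of all (a,b) ∈ ℝ² satisfying 3a + b > 0, 3a + (5/4)b > 0, 3a + (11/12)b > 0, 3a + (3/4)b > 0, 3a + (13/12)b > 0, 3a + (5/6)b > 0, 3a + (7/6)b > 0, 3a + (4/3)b > 0 and 3a + (2/3)b > 0 is NOT contained in the conical hull of the vectors (1/3, 0), (4/3, -3), (0, 1) in ℝ²; that is, there exists a point satisfying all the listed inequalities that is not a nonnegative linear combination of these three vectors. -/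
theorem stmt_16 :
    ¬ ({p : ℝ × ℝ | 3 * p.1 + p.2 > 0 ∧
      3 * p.1 + (5/4) * p.2 > 0 ∧
      3 * p.1 + (11/12) * p.2 > 0 ∧
      3 * p.1 + (3/4) * p.2 > 0 ∧
      3 * p.1 + (13/12) * p.2 > 0 ∧
      3 * p.1 + (5/6) * p.2 > 0 ∧
      3 * p.1 + (7/6) * p.2 > 0 ∧
      3 * p.1 + (4/3) * p.2 > 0 ∧
      3 * p.1 + (2/3) * p.2 > 0} ⊆
      coneHull3 (1/3, 0) (4/3, -3) (0, 1)) := by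
  intro h
  have hmem : ((-1, 9) : ℝ × ℝ) ∈ {p : ℝ × ℝ | 3 * p.1 + p.2 > 0 ∧
      3 * p.1 + (5/4) * p.2 > 0 ∧
      3 * p.1 + (11/12) * p.2 > 0 ∧
      3 * p.1 + (3/4) * p.2 > 0 ∧
      3 * p.1 + (13/12) * p.2 > 0 ∧
      3 * p.1 + (5/6) * p.2 > 0 ∧
      3 * p.1 + (7/6) * p.2 > 0 ∧
      3 * p.1 + (4/3) * p.2 > 0 ∧
      3 * p.1 + (2/3) * p.2 > 0} := by
    simp only [Set.mem_setOf_eq]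
    norm_num
  obtain ⟨c₁, c₂, c₃, hc₁, hc₂, hc₃, heq⟩ := h hmem
  have h1 : (-1 : ℝ) = c₁ * (1/3) + c₂ * (4/3) + c₃ * 0 := congrArg Prod.fst heq
  nlinarith
end

section
/- The set of all (a,b) ∈ ℝ² satisfying 10a + 3b > 0, 14a + 5b > 0, 3a + b > 0, 2a + (1/2)b > 0 and 4a + (3/2)b > 0 is NOT contained in the conical hull of the vectors (0, 1), (2, -5), (1, -2) in ℝ²; that is, there exists a point satisfying all the listed inequalities that is not a nonnegative linear combination of these three vectors. -/
theorem stmt_17 :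
    ¬ ({p : ℝ × ℝ | 10 * p.1 + 3 * p.2 > 0 ∧
      14 * p.1 + 5 * p.2 > 0 ∧
      3 * p.1 + p.2 > 0 ∧
      2 * p.1 + (1/2) * p.2 > 0 ∧
      4 * p.1 + (3/2) * p.2 > 0} ⊆
      coneHull3 (0, 1) (2, -5) (1, -2)) := by
  intro h
  have hmem : ((10 : ℝ), (-26 : ℝ)) ∈ {p : ℝ × ℝ | 10 * p.1 + 3 * p.2 > 0 ∧
      14 * p.1 + 5 * p.2 > 0 ∧
      3 * p.1 + p.2 > 0 ∧
      2 * p.1 + (1/2) * p.2 > 0 ∧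
      4 * p.1 + (3/2) * p.2 > 0} := by
    constructor <;> [norm_num; constructor] <;> [norm_num; constructor] <;>
      [norm_num; constructor] <;> norm_num
  obtain ⟨c₁, c₂, c₃, h1, h2, h3, heq⟩ := h hmem
  have hx : (10 : ℝ) = 2 * c₂ + c₃ := by
    have := congrArg Prod.fst heq
    simp [Prod.smul_def] at this
    linarith
  have hy : (-26 : ℝ) = c₁ - 5 * c₂ - 2 * c₃ := by
    have := congrArg Prod.snd heq
    simp [Prod.smul_def] at this
    linarith
  linarith
end

section
/- The set of all (a,b) ∈ ℝ² satisfying 5a + b > 0, 5a + (4/3)b > 0, 5a + (5/6)b > 0, 5a + (7/6)b > 0, 5a + (2/3)b > 0, 5a + (1/2)b > 0 and 5a + (3/2)b > 0 is NOT contained in the conical hull of the vectors (1/5, 0), (3/5, -2), (0, 1), (3/5, 0) in ℝ²; that is, there exists a point satisfying all the listed inequalities that is not a nonnegative linear combination of these four vectors. -/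
theorem stmt_18 :
    ¬ ({p : ℝ × ℝ | 5 * p.1 + p.2 > 0 ∧
      5 * p.1 + (4/3) * p.2 > 0 ∧
      5 * p.1 + (5/6) * p.2 > 0 ∧
      5 * p.1 + (7/6) * p.2 > 0 ∧
      5 * p.1 + (2/3) * p.2 > 0 ∧
      5 * p.1 + (1/2) * p.2 > 0 ∧
      5 * p.1 + (3/2) * p.2 > 0} ⊆
      coneHull4 (1/5, 0) (3/5, -2) (0, 1) (3/5, 0)) := by
  intro h
  have hmem : ((-1 : ℝ), (21 : ℝ)) ∈ {p : ℝ × ℝ | 5 * p.1 + p.2 > 0 ∧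
      5 * p.1 + (4/3) * p.2 > 0 ∧
      5 * p.1 + (5/6) * p.2 > 0 ∧
      5 * p.1 + (7/6) * p.2 > 0 ∧
      5 * p.1 + (2/3) * p.2 > 0 ∧
      5 * p.1 + (1/2) * p.2 > 0 ∧
      5 * p.1 + (3/2) * p.2 > 0} := by
    simp only [Set.mem_setOf_eq]
    norm_num
  obtain ⟨c₁, c₂, c₃, c₄, h₁, h₂, h₃, h₄, heq⟩ := h hmem
  have hx : (-1 : ℝ) = c₁ * (1/5) + c₂ * (3/5) + c₃ * 0 + c₄ * (3/5) := by
    have := congrArg Prod.fst heq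
    simpa [Prod.smul_def] using this
  nlinarith
end

section
/- The set of all (a,b) ∈ ℝ² satisfying 15a + (6/5)b > 0, 15a + (19/20)b > 0, 15a + b > 0, 15a + (4/5)b > 0, 15a + (21/20)b > 0, 15a + (17/20)b > 0, 15a + (11/10)b > 0, 15a + (9/10)b > 0, 15a + (23/20)b > 0, 15a + (5/4)b > 0 and 15a + (3/4)b > 0 is NOT contained in the conical hull of the vectors (1/3, -4), (0, 1), (1/5, 0) in ℝ²; that is, there exists a point satisfying all the listed inequalities that is not a nonnegative linear combination of these three vectors. -/
theorem stmt_19 :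
    ¬ ({p : ℝ × ℝ | 15 * p.1 + (6/5) * p.2 > 0 ∧
      15 * p.1 + (19/20) * p.2 > 0 ∧
      15 * p.1 + p.2 > 0 ∧
      15 * p.1 + (4/5) * p.2 > 0 ∧
      15 * p.1 + (21/20) * p.2 > 0 ∧
      15 * p.1 + (17/20) * p.2 > 0 ∧
      15 * p.1 + (11/10) * p.2 > 0 ∧
      15 * p.1 + (9/10) * p.2 > 0 ∧
      15 * p.1 + (23/20) * p.2 > 0 ∧
      15 * p.1 + (5/4) * p.2 > 0 ∧
      15 * p.1 + (3/4) * p.2 > 0} ⊆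
      coneHull3 (1/3, -4) (0, 1) (1/5, 0)) := by
  intro h
  obtain ⟨c₁, c₂, c₃, h₁, h₂, h₃, heq⟩ := h (show (((-1 : ℝ), (30 : ℝ))) ∈ _ by
    constructor <;> norm_num)
  have := congrArg Prod.fst heq
  simp [Prod.fst] at this
  nlinarith
end
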